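/- Every virtually simple module is uniform, i.e., any two nonzero submodules have nonzero intersection. -/
import Mathlib


def VirtuallySimple (R : Type*) [Ring R] (M : Type*) [AddCommGroup M] [Module R M] : Prop :=
  Nontrivial M ∧ ∀ N : Submodule R M, N ≠ ⊥ → Nonempty (N ≃ₗ[R] M)

/-- Every virtually simple module is uniform: any two nonzero submodules have
nonzero intersection. -/
theorem stmt4 (R : Type*) [Ring R] (M : Type*) [AddCommGroup M] [Module R M]
    (h : VirtuallySimple R M) :
    ∀ N K : Submodule R M, N ≠ ⊥ → K ≠ ⊥ → N ⊓ K ≠ ⊥ := by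
  obtain ⟨hnt, hvs⟩ := h
  -- Step 1: M is finitely generated (isomorphic to a cyclic submodule).
  have hMfin : Module.Finite R M := by
    obtain ⟨x, hx⟩ := exists_ne (0 : M)
    have hspan : Submodule.span R {x} ≠ ⊥ := by
      simpa [Submodule.span_singleton_eq_bot] using hx
    obtain ⟨e⟩ := hvs _ hspan
    have : Module.Finite R (Submodule.span R {x}) :=
      Module.Finite.iff_fg.mpr (Submodule.fg_span_singleton x)
    exact Module.Finite.equiv e
  -- Step 2: M is Noetherian (every nonzero submodule is iso to M, hence f.g.).
  have hNoeth : IsNoetherian R M := by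
    rw [isNoetherian_def]
    intro s
    rcases eq_or_ne s ⊥ with hs | hs
    · simpa [hs] using Submodule.fg_bot
    · obtain ⟨e⟩ := hvs s hs
      have : Module.Finite R s := Module.Finite.equiv e.symm
      exact Module.Finite.iff_fg.mp this
  intro N K hN hK hNK
  -- Step 3: get an injective endomorphism g with range N.
  obtain ⟨φ⟩ := hvs N hN
  set g : M →ₗ[R] M := N.subtype ∘ₗ (φ.symm : M →ₗ[R] N) with hg
  have hginj : Function.Injective g := by
    intro a b hab
    exact φ.symm.injective (Subtype.ext hab)
  have hgrange : ∀ x : M, g x ∈ N := fun x => (φ.symm x).2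
  -- Step 4: build the ascending chain C n = K + g(K) + ... + g^(n-1)(K)
  set C : ℕ → Submodule R M := fun n => Nat.rec ⊥ (fun _ Cn => K ⊔ Submodule.map g Cn) n
    with hC
  have hC0 : C 0 = ⊥ := rfl
  have hCsucc : ∀ n, C (n + 1) = K ⊔ Submodule.map g (C n) := fun n => rfl
  set D : ℕ → Submodule R M := fun n => Nat.rec K (fun _ Dn => Submodule.map g Dn) n with hD
  have hD0 : D 0 = K := rfl
  have hDsucc : ∀ n, D (n + 1) = Submodule.map g (D n) := fun n => rfl
  -- D n is nonzero
  have hDne : ∀ n, D n ≠ ⊥ := by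
    intro n
    induction n with
    | zero => exact hK
    | succ n ih =>
      rw [hDsucc]
      intro hbot
      apply ih
      rw [eq_bot_iff]
      intro x hx
      have : g x ∈ Submodule.map g (D n) := ⟨x, hx, rfl⟩
      rw [hbot, Submodule.mem_bot] at this
      have : g x = g 0 := by simpa using this
      simpa using hginj this
  -- independence: C n ⊓ D n = ⊥
  have hind : ∀ n, C n ⊓ D n = ⊥ := by
    intro n
    induction n with
    | zero => simp [hC0]
    | succ n ih =>
      rw [hCsucc, hDsucc, eq_bot_iff]
      rintro x ⟨hx1, hx2⟩
      obtain ⟨z, hz, rfl⟩ := hx2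
      obtain ⟨k, hk, w, hw, hkw⟩ := Submodule.mem_sup.mp hx1
      obtain ⟨c, hc, rfl⟩ := hw
      have hkN : k ∈ N := by
        have : k = g (z - c) := by
          rw [map_sub]
          rw [← hkw]; abel
        rw [this]; exact hgrange _
      have hk0 : k = 0 := by
        have : k ∈ N ⊓ K := ⟨hkN, hk⟩
        rwa [hNK, Submodule.mem_bot] at this
      have hzc : z = c := by
        apply hginj
        rw [← hkw, hk0, zero_add]
      have : z ∈ C n ⊓ D n := ⟨hzc ▸ hc, hz⟩
      rw [ih, Submodule.mem_bot] at this
      simp [this]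
  -- D n ≤ C (n+1)
  have hDC : ∀ n, D n ≤ C (n + 1) := by
    intro n
    induction n with
    | zero => rw [hD0, hCsucc]; exact le_sup_left
    | succ n ih =>
      rw [hDsucc, hCsucc (n+1)]
      exact le_trans (Submodule.map_mono ih) le_sup_right
  -- C is monotone
  have hCmono : ∀ n, C n ≤ C (n + 1) := by
    intro n
    induction n with
    | zero => simp [hC0]
    | succ n ih =>
      rw [hCsucc, hCsucc (n+1)]
      exact sup_le_sup_left (Submodule.map_mono ih) K
  -- C is strictly increasing, contradicting Noetherian.
  obtain ⟨n, hn⟩ := monotone_stabilizes_iff_noetherian.mpr hNoeth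
    ⟨C, monotone_nat_of_le_succ hCmono⟩
  have heq : C n = C (n + 1) := hn (n + 1) (Nat.le_succ n)
  have : D n ≤ C n := heq ▸ hDC n
  exact hDne n (by rw [← hind n, inf_eq_right.mpr this])
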